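/- arXiv:1807.09614 — 4 statements merged into one kernel-verified Lean document; each statement's English description precedes it below -/
import Mathlib

section
/- Assume p_{−1,−1} = 0, p_{0,0} > 0 and p_{0,1} > 0. Then for every complex y with |y| = 1 and y ≠ 1, the polynomial x ↦ R(x,y) has exactly one root (counted with multiplicity) in the open unit disk {x : |x| < 1}. -/
/-!
For `|y| = 1` write `R(·, y) = a x² + b x + c`. The outer coefficients are bounded by the
triangle inequality, `|a| + |c| ≤ 1 - p₀₀ - p₀₋ - p₀₊`, while `Re (b ȳ) = 1 - p₀₀ - (p₀₋ + p₀₊) Re y`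
is strictly larger once `y ≠ 1` and `p₀₊ > 0`. A quadratic whose middle coefficient dominates has
exactly one root in the unit disk: by Vieta its roots satisfy `(1 - |x₁|)(1 - |x₂|) < 0`.
-/

open Polynomial ComplexConjugate

section NormedField

variable {K : Type*} [NormedField K]

lemma card_filter_norm_lt_one_pair {x₁ x₂ : K} (h : 1 + ‖x₁‖ * ‖x₂‖ < ‖x₁‖ + ‖x₂‖) :
    Multiset.card (({x₁, x₂} : Multiset K).filter (fun z => ‖z‖ < 1)) = 1 := by
  have hsep : (‖x₁‖ - 1) * (‖x₂‖ - 1) < 0 := by linarith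
  simp only [Multiset.insert_eq_cons, Multiset.filter_cons, Multiset.filter_singleton]
  rcases lt_or_ge ‖x₁‖ 1 with h₁ | h₁
  · have h₂ : ¬ ‖x₂‖ < 1 := by nlinarith
    simp [h₁, h₂]
  · have h₂ : ‖x₂‖ < 1 := by nlinarith
    simp [not_lt.mpr h₁, h₂]

lemma card_roots_quadratic_filter_norm_lt_one [IsAlgClosed K] {a b c : K}
    (h : ‖a‖ + ‖c‖ < ‖b‖) :
    Multiset.card ((C a * X ^ 2 + C b * X + C c).roots.filter (fun z => ‖z‖ < 1)) = 1 := by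
  by_cases ha : a = 0
  · subst ha
    simp only [norm_zero, zero_add] at h
    have hb : b ≠ 0 := norm_pos_iff.mp ((norm_nonneg c).trans_lt h)
    have hroot : ‖-(b⁻¹ * c)‖ < 1 := by
      rw [norm_neg, norm_mul, norm_inv, inv_mul_lt_one₀ (norm_pos_iff.mpr hb)]
      exact h
    rw [map_zero, zero_mul, zero_add, roots_C_mul_X_add_C c hb, Multiset.filter_singleton,
      if_pos hroot, Multiset.card_singleton]
  · have hcard : Multiset.card (C a * X ^ 2 + C b * X + C c).roots = 2 := by
      rw [IsAlgClosed.card_roots_eq_natDegree, natDegree_quadratic ha]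
    obtain ⟨x₁, x₂, hroots⟩ := Multiset.card_eq_two.mp hcard
    obtain ⟨rfl, rfl⟩ := (roots_quadratic_eq_pair_iff_of_ne_zero ha).mp hroots
    rw [hroots]
    apply card_filter_norm_lt_one_pair
    have hapos : 0 < ‖a‖ := norm_pos_iff.mpr ha
    have hsum : ‖-a * (x₁ + x₂)‖ ≤ ‖a‖ * (‖x₁‖ + ‖x₂‖) := by
      rw [norm_mul, norm_neg]
      exact mul_le_mul_of_nonneg_left (norm_add_le _ _) hapos.le
    rw [norm_mul, norm_mul] at h
    nlinarith

end NormedField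

lemma norm_add_mul_add_mul_sq_le {y : ℂ} (hy : ‖y‖ = 1) {r₀ r₁ r₂ : ℝ}
    (h₀ : 0 ≤ r₀) (h₁ : 0 ≤ r₁) (h₂ : 0 ≤ r₂) :
    ‖(r₀ : ℂ) + r₁ * y + r₂ * y ^ 2‖ ≤ r₀ + r₁ + r₂ := by
  refine (norm_add₃_le).trans ?_
  simp [hy, abs_of_nonneg h₀, abs_of_nonneg h₁, abs_of_nonneg h₂]

lemma Complex.re_lt_one_of_norm_eq_one {y : ℂ} (hy : ‖y‖ = 1) (hy1 : y ≠ 1) : y.re < 1 := by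
  refine (hy ▸ y.re_le_norm).lt_of_ne fun hre => hy1 ?_
  have him : y.im = 0 := (Complex.nonneg_iff.mp (Complex.re_eq_norm.mp (hre.trans hy.symm))).2.symm
  exact Complex.ext hre him

lemma sub_lt_norm_of_norm_eq_one {y : ℂ} (hy : ‖y‖ = 1) (hy1 : y ≠ 1) {qm q0 qp : ℝ}
    (hq : 0 < qm + qp) :
    1 - q0 - qm - qp < ‖y - ((qm : ℂ) + q0 * y + qp * y ^ 2)‖ := by
  set b := y - ((qm : ℂ) + q0 * y + qp * y ^ 2)
  have hyy : y * conj y = 1 := by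
    rw [Complex.mul_conj, Complex.normSq_eq_norm_sq, hy]; norm_num
  have hb : b * conj y = 1 - qm * conj y - q0 - qp * y := by
    simp only [b]; linear_combination (1 - q0 - qp * y) * hyy
  have hre : (b * conj y).re = 1 - q0 - (qm + qp) * y.re := by
    rw [hb]
    simp only [Complex.sub_re, Complex.one_re, Complex.mul_re, Complex.ofReal_re, Complex.conj_re,
      Complex.ofReal_im, Complex.conj_im, mul_neg, zero_mul, neg_zero, sub_zero]
    ring
  have hnorm : ‖b * conj y‖ = ‖b‖ := by
    rw [norm_mul, Complex.norm_conj, hy, mul_one]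
  have hy_re := Complex.re_lt_one_of_norm_eq_one hy hy1
  calc 1 - q0 - qm - qp < 1 - q0 - (qm + qp) * y.re := by nlinarith
    _ = (b * conj y).re := hre.symm
    _ ≤ ‖b‖ := hnorm ▸ Complex.re_le_norm _

theorem stmt_5_general
    (pmm pm0 pmp p0m p00 p0p ppm pp0 ppp : ℝ)
    (hmm : 0 ≤ pmm) (hm0 : 0 ≤ pm0) (hmp : 0 ≤ pmp)
    (h0m : 0 ≤ p0m)
    (hpm : 0 ≤ ppm) (hp0 : 0 ≤ pp0) (hpp : 0 ≤ ppp)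
    (hsum : pmm + pm0 + pmp + p0m + p00 + p0p + ppm + pp0 + ppp = 1)
    (h0ppos : 0 < p0p)
    (Rx : ℂ → Polynomial ℂ)
    (hRx : ∀ y : ℂ, Rx y =
      C (-((ppm : ℂ) + (pp0 : ℂ) * y + (ppp : ℂ) * y ^ 2)) * X ^ 2
      + C (y - ((p0m : ℂ) + (p00 : ℂ) * y + (p0p : ℂ) * y ^ 2)) * X
      + C (-((pmm : ℂ) + (pm0 : ℂ) * y + (pmp : ℂ) * y ^ 2))) :
    ∀ y : ℂ, ‖y‖ = 1 → y ≠ 1 →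
      Multiset.card (Multiset.filter (fun z => ‖z‖ < 1) (Rx y).roots) = 1 := by
  intro y hy hy1
  rw [hRx y]
  apply card_roots_quadratic_filter_norm_lt_one
  rw [norm_neg, norm_neg]
  calc _ ≤ (ppm + pp0 + ppp) + (pmm + pm0 + pmp) :=
        add_le_add (norm_add_mul_add_mul_sq_le hy hpm hp0 hpp)
          (norm_add_mul_add_mul_sq_le hy hmm hm0 hmp)
    _ = 1 - p00 - p0m - p0p := by linarith
    _ < _ := sub_lt_norm_of_norm_eq_one hy hy1 (by linarith)

/-- Assume $p_{-1,-1}=0$, $p_{0,0}>0$, $p_{0,1}>0$. For every $y$ with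
$|y|=1$, $y \ne 1$, the polynomial $x \mapsto R(x,y)$ has exactly one root (with
multiplicity) in the open unit disk. -/
theorem stmt_5
    (pmm pm0 pmp p0m p00 p0p ppm pp0 ppp : ℝ)
    (hmm : 0 ≤ pmm) (hm0 : 0 ≤ pm0) (hmp : 0 ≤ pmp)
    (h0m : 0 ≤ p0m) (h00 : 0 ≤ p00) (h0p : 0 ≤ p0p)
    (hpm : 0 ≤ ppm) (hp0 : 0 ≤ pp0) (hpp : 0 ≤ ppp)
    (hsum : pmm + pm0 + pmp + p0m + p00 + p0p + ppm + pp0 + ppp = 1)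
    (hmm0 : pmm = 0) (h00pos : 0 < p00) (h0ppos : 0 < p0p)
    (Rx : ℂ → Polynomial ℂ)
    (hRx : ∀ y : ℂ, Rx y =
      C (-((ppm : ℂ) + (pp0 : ℂ) * y + (ppp : ℂ) * y ^ 2)) * X ^ 2
      + C (y - ((p0m : ℂ) + (p00 : ℂ) * y + (p0p : ℂ) * y ^ 2)) * X
      + C (-((pmm : ℂ) + (pm0 : ℂ) * y + (pmp : ℂ) * y ^ 2))) :
    ∀ y : ℂ, ‖y‖ = 1 → y ≠ 1 →
      Multiset.card (Multiset.filter (fun z => ‖z‖ < 1) (Rx y).roots) = 1 :=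
  stmt_5_general pmm pm0 pmp p0m p00 p0p ppm pp0 ppp hmm hm0 hmp h0m hpm hp0 hpp hsum h0ppos Rx hRx
end

section
/- Assume p_{−1,−1} = 0, p_{0,0} > 0 and p_{1,0} > 0. Then for every complex x with |x| = 1 and x ≠ 1, the polynomial y ↦ R(x,y) has exactly one root (counted with multiplicity) in the open unit disk {y : |y| < 1}. -/
/-!
Write `R(x, ·) = a y² + b y + c`. On the unit circle the triangle inequality gives
`‖a‖ ≤ p₋₁₁ + p₀₁ + p₁₁` and `‖c‖ ≤ p₋₁₋₁ + p₀₋₁ + p₁₋₁`, while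
`‖b‖ ≥ ‖1 - p₀₀ - p₁₀ x‖ - p₋₁₀ > 1 - p₀₀ - p₁₀ - p₋₁₀`, the strict inequality because
`p₁₀ > 0` and `x ≠ 1`. As the `p`'s sum to one, `‖a‖ + ‖c‖ < ‖b‖`. For a quadratic with
roots `y₁, y₂` this dominance reads `‖a‖ (1 + ‖y₁‖‖y₂‖) < ‖a‖ (‖y₁‖ + ‖y₂‖)`, i.e.
`(1 - ‖y₁‖)(1 - ‖y₂‖) < 0`: exactly one root lies in the open unit disk.
-/

open Polynomial

theorem Multiset.card_filter_pair_eq_one {α : Type*} {p : α → Prop} [DecidablePred p] {a b : α}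
    (h : p a ↔ ¬ p b) : card (filter p {a, b}) = 1 := by
  by_cases ha : p a
  · simp [ha, h.mp ha]
  · simp [ha, Multiset.filter_singleton, not_not.mp (h.not.mp ha)]

theorem exists_roots_quadratic_eq_pair {K : Type*} [Field K] [IsAlgClosed K] {a b c : K}
    (ha : a ≠ 0) : ∃ y₁ y₂ : K, (C a * X ^ 2 + C b * X + C c).roots = {y₁, y₂} ∧
      b = -(a * (y₁ + y₂)) ∧ c = a * (y₁ * y₂) := by
  have hcard := IsAlgClosed.card_roots_eq_natDegree (p := C a * X ^ 2 + C b * X + C c)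
  obtain ⟨y₁, y₂, hy⟩ := Multiset.card_eq_two.mp (hcard.trans (natDegree_quadratic ha))
  have hfact := C_leadingCoeff_mul_prod_multiset_X_sub_C hcard
  simp only [leadingCoeff_quadratic ha, hy, Multiset.insert_eq_cons, Multiset.map_cons,
    Multiset.map_singleton, Multiset.prod_cons, Multiset.prod_singleton] at hfact
  refine ⟨y₁, y₂, hy, ?_, ?_⟩
  · have := congrArg (coeff · 1) hfact
    simp [coeff_C, coeff_X, mul_sub, sub_mul] at this
    linear_combination -this
  · have := congrArg (coeff · 0) hfact
    simp [coeff_C] at this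
    linear_combination -this

theorem card_roots_quadratic_norm_lt_one {a b c : ℂ} (h : ‖a‖ + ‖c‖ < ‖b‖) :
    Multiset.card
      (Multiset.filter (fun z => ‖z‖ < 1) (C a * X ^ 2 + C b * X + C c).roots) = 1 := by
  have hb : b ≠ 0 := by
    rintro rfl
    rw [norm_zero] at h
    linarith [norm_nonneg a, norm_nonneg c]
  rcases eq_or_ne a 0 with rfl | ha
  · rw [C_0, zero_mul, zero_add, roots_C_mul_X_add_C c hb, Multiset.filter_singleton,
      if_pos, Multiset.card_singleton]
    rw [norm_neg, norm_mul, norm_inv, inv_mul_lt_one₀ (norm_pos_iff.mpr hb)]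
    simpa using h
  · obtain ⟨y₁, y₂, hroots, rfl, rfl⟩ := exists_roots_quadratic_eq_pair (b := b) (c := c) ha
    rw [hroots]
    apply Multiset.card_filter_pair_eq_one
    have hprod : (1 - ‖y₁‖) * (1 - ‖y₂‖) < 0 := by
      have : ‖a‖ * (1 + ‖y₁‖ * ‖y₂‖) < ‖a‖ * (‖y₁‖ + ‖y₂‖) := by
        calc ‖a‖ * (1 + ‖y₁‖ * ‖y₂‖) = ‖a‖ + ‖a * (y₁ * y₂)‖ := by simp only [norm_mul]; ring
          _ < ‖-(a * (y₁ + y₂))‖ := h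
          _ ≤ ‖a‖ * (‖y₁‖ + ‖y₂‖) := by rw [norm_neg, norm_mul]; gcongr; exact norm_add_le _ _
      nlinarith [lt_of_mul_lt_mul_left this (norm_nonneg a)]
    rcases mul_neg_iff.mp hprod with ⟨h₁, h₂⟩ | ⟨h₁, h₂⟩ <;> constructor <;> intros <;> linarith

theorem norm_ofReal_sub_mul_sq {α β : ℝ} {x : ℂ} (hx : ‖x‖ = 1) :
    ‖(α : ℂ) - β * x‖ ^ 2 = (α - β) ^ 2 + α * β * ‖1 - x‖ ^ 2 := by
  have hx' : Complex.normSq x = 1 := by rw [Complex.normSq_eq_norm_sq, hx, one_pow]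
  rw [Complex.normSq_apply] at hx'
  simp only [← Complex.normSq_eq_norm_sq, Complex.normSq_apply, Complex.sub_re,
    Complex.sub_im, Complex.mul_re, Complex.mul_im, Complex.ofReal_re, Complex.ofReal_im,
    Complex.one_re, Complex.one_im]
  linear_combination (β ^ 2 - α * β) * hx'

theorem abs_sub_lt_norm_ofReal_sub_mul {α β : ℝ} {x : ℂ} (hα : 0 < α) (hβ : 0 < β)
    (hx : ‖x‖ = 1) (hx1 : x ≠ 1) : |α - β| < ‖(α : ℂ) - β * x‖ := by
  have : 0 < ‖1 - x‖ := norm_pos_iff.mpr (sub_ne_zero.mpr hx1.symm)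
  rw [← abs_norm, ← sq_lt_sq, norm_ofReal_sub_mul_sq hx]
  nlinarith [mul_pos hα hβ, pow_pos this 2]

theorem norm_add_mul_add_mul_sq_le_s6 {u v w : ℝ} (hu : 0 ≤ u) (hv : 0 ≤ v) (hw : 0 ≤ w)
    {x : ℂ} (hx : ‖x‖ = 1) : ‖(u : ℂ) + v * x + w * x ^ 2‖ ≤ u + v + w := by
  refine (norm_add₃_le).trans_eq ?_
  simp [hx, abs_of_nonneg, hu, hv, hw]

theorem stmt_6_general
    (pmm pm0 pmp p0m p00 p0p ppm pp0 ppp : ℝ)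
    (hmm : 0 ≤ pmm) (hm0 : 0 ≤ pm0) (hmp : 0 ≤ pmp)
    (h0m : 0 ≤ p0m) (h0p : 0 ≤ p0p)
    (hpm : 0 ≤ ppm) (hpp : 0 ≤ ppp)
    (hsum : pmm + pm0 + pmp + p0m + p00 + p0p + ppm + pp0 + ppp = 1)
    (hp0pos : 0 < pp0)
    (Ry : ℂ → Polynomial ℂ)
    (hRy : ∀ x : ℂ, Ry x =
      C (-((pmp : ℂ) + (p0p : ℂ) * x + (ppp : ℂ) * x ^ 2)) * X ^ 2
      + C (x - ((pm0 : ℂ) + (p00 : ℂ) * x + (pp0 : ℂ) * x ^ 2)) * X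
      + C (-((pmm : ℂ) + (p0m : ℂ) * x + (ppm : ℂ) * x ^ 2))) :
    ∀ x : ℂ, ‖x‖ = 1 → x ≠ 1 →
      Multiset.card (Multiset.filter (fun z => ‖z‖ < 1) (Ry x).roots) = 1 := by
  intro x hx hx1
  rw [hRy x]
  apply card_roots_quadratic_norm_lt_one
  have ha := norm_add_mul_add_mul_sq_le_s6 hmp h0p hpp hx
  have hc := norm_add_mul_add_mul_sq_le_s6 hmm h0m hpm hx
  have hb : 1 - p00 - pp0 - pm0 < ‖x - ((pm0 : ℂ) + p00 * x + pp0 * x ^ 2)‖ :=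
    calc 1 - p00 - pp0 - pm0
        ≤ |1 - p00 - pp0| - pm0 := by linarith [le_abs_self (1 - p00 - pp0)]
      _ < ‖((1 - p00 : ℝ) : ℂ) - pp0 * x‖ - pm0 := by
          gcongr
          exact abs_sub_lt_norm_ofReal_sub_mul (by linarith) hp0pos hx hx1
      _ = ‖x * (((1 - p00 : ℝ) : ℂ) - pp0 * x)‖ - ‖(pm0 : ℂ)‖ := by
          rw [norm_mul, hx, one_mul, Complex.norm_of_nonneg hm0]
      _ ≤ ‖x * (((1 - p00 : ℝ) : ℂ) - pp0 * x) - pm0‖ := norm_sub_norm_le _ _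
      _ = ‖x - ((pm0 : ℂ) + p00 * x + pp0 * x ^ 2)‖ := by push_cast; ring_nf
  rw [norm_neg, norm_neg]
  linarith

/-- Assume $p_{-1,-1}=0$, $p_{0,0}>0$, $p_{1,0}>0$. For every $x$ with
$|x|=1$, $x \ne 1$, the polynomial $y \mapsto R(x,y)$ has exactly one root (with
multiplicity) in the open unit disk. -/
theorem stmt_6
    (pmm pm0 pmp p0m p00 p0p ppm pp0 ppp : ℝ)
    (hmm : 0 ≤ pmm) (hm0 : 0 ≤ pm0) (hmp : 0 ≤ pmp)
    (h0m : 0 ≤ p0m) (h00 : 0 ≤ p00) (h0p : 0 ≤ p0p)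
    (hpm : 0 ≤ ppm) (hp0 : 0 ≤ pp0) (hpp : 0 ≤ ppp)
    (hsum : pmm + pm0 + pmp + p0m + p00 + p0p + ppm + pp0 + ppp = 1)
    (hmm0 : pmm = 0) (h00pos : 0 < p00) (hp0pos : 0 < pp0)
    (Ry : ℂ → Polynomial ℂ)
    (hRy : ∀ x : ℂ, Ry x =
      C (-((pmp : ℂ) + (p0p : ℂ) * x + (ppp : ℂ) * x ^ 2)) * X ^ 2
      + C (x - ((pm0 : ℂ) + (p00 : ℂ) * x + (pp0 : ℂ) * x ^ 2)) * X
      + C (-((pmm : ℂ) + (p0m : ℂ) * x + (ppm : ℂ) * x ^ 2))) :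
    ∀ x : ℂ, ‖x‖ = 1 → x ≠ 1 →
      Multiset.card (Multiset.filter (fun z => ‖z‖ < 1) (Ry x).roots) = 1 :=
  stmt_6_general pmm pm0 pmp p0m p00 p0p ppm pp0 ppp hmm hm0 hmp h0m h0p hpm hpp hsum hp0pos Ry hRy
end

section
/- Assume p_{−1,−1} = 0. Then for every complex x, R(x,1) = (1−x)·[(p_{1,−1}+p_{1,0}+p_{1,1})x − (p_{−1,0}+p_{−1,1})]. Consequently, if γ := p_{1,−1}+p_{1,0}+p_{1,1} − (p_{−1,0}+p_{−1,1}) < 0, then every root x of R(x,1) = 0 with |x| ≤ 1 satisfies x = 1. -/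
/-- Assume $p_{-1,-1}=0$. Then $R(x,1) = (1-x)[(p_{1,-1}+p_{1,0}+p_{1,1})x
- (p_{-1,0}+p_{-1,1})]$ for every complex $x$; consequently, if
$\gamma = p_{1,-1}+p_{1,0}+p_{1,1}-(p_{-1,0}+p_{-1,1}) < 0$, then every root $x$ of
$R(x,1)=0$ with $|x| \le 1$ satisfies $x = 1$. -/
theorem stmt_7
    (pmm pm0 pmp p0m p00 p0p ppm pp0 ppp : ℝ)
    (hmm : 0 ≤ pmm) (hm0 : 0 ≤ pm0) (hmp : 0 ≤ pmp)
    (h0m : 0 ≤ p0m) (h00 : 0 ≤ p00) (h0p : 0 ≤ p0p)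
    (hpm : 0 ≤ ppm) (hp0 : 0 ≤ pp0) (hpp : 0 ≤ ppp)
    (hsum : pmm + pm0 + pmp + p0m + p00 + p0p + ppm + pp0 + ppp = 1)
    (hmm0 : pmm = 0)
    (R : ℂ → ℂ → ℂ)
    (hR : ∀ x y : ℂ, R x y = x * y -
      ((pmm : ℂ) + (pm0 : ℂ) * y + (pmp : ℂ) * y ^ 2
        + (p0m : ℂ) * x + (p00 : ℂ) * x * y + (p0p : ℂ) * x * y ^ 2
        + (ppm : ℂ) * x ^ 2 + (pp0 : ℂ) * x ^ 2 * y + (ppp : ℂ) * x ^ 2 * y ^ 2)) :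
    (∀ x : ℂ, R x 1 =
      (1 - x) * (((ppm : ℂ) + (pp0 : ℂ) + (ppp : ℂ)) * x - ((pm0 : ℂ) + (pmp : ℂ)))) ∧
    (ppm + pp0 + ppp - (pm0 + pmp) < 0 →
      ∀ x : ℂ, R x 1 = 0 → ‖x‖ ≤ 1 → x = 1) := by
  have hcsum : (pmm : ℂ) + pm0 + pmp + p0m + p00 + p0p + ppm + pp0 + ppp = 1 := by
    exact_mod_cast congrArg (Complex.ofReal) hsum
  have hcmm : (pmm : ℂ) = 0 := by exact_mod_cast hmm0
  have h1 : ∀ x : ℂ, R x 1 =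
      (1 - x) * (((ppm : ℂ) + (pp0 : ℂ) + (ppp : ℂ)) * x - ((pm0 : ℂ) + (pmp : ℂ))) := by
    intro x
    rw [hR]
    linear_combination (-x) * hcsum + (x - 1) * hcmm
  refine ⟨h1, ?_⟩
  intro hγ x hx hnx
  by_contra hne
  have h2 : ((ppm : ℂ) + pp0 + ppp) * x - ((pm0 : ℂ) + pmp) = 0 := by
    rcases mul_eq_zero.mp ((h1 x).symm.trans hx) with h | h
    · exact absurd (sub_eq_zero.mp h).symm hne
    · exact h
  have h3 : ((ppm : ℂ) + pp0 + ppp) * x = ((pm0 : ℂ) + pmp) := by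
    exact sub_eq_zero.mp h2
  have ha : (0:ℝ) ≤ ppm + pp0 + ppp := by linarith
  have hb : ppm + pp0 + ppp < pm0 + pmp := by linarith
  have hn : ‖((ppm : ℂ) + pp0 + ppp) * x‖ = (ppm + pp0 + ppp) * ‖x‖ := by
    rw [norm_mul]
    congr 1
    rw [show ((ppm : ℂ) + pp0 + ppp) = ((ppm + pp0 + ppp : ℝ) : ℂ) by push_cast; ring,
      Complex.norm_real, Real.norm_of_nonneg ha]
  have hn2 : ‖((pm0 : ℂ) + pmp)‖ = pm0 + pmp := by
    rw [show ((pm0 : ℂ) + pmp) = ((pm0 + pmp : ℝ) : ℂ) by push_cast; ring,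
      Complex.norm_real, Real.norm_of_nonneg (by linarith)]
  have := congrArg norm h3
  rw [hn, hn2] at this
  nlinarith [norm_nonneg x, mul_le_of_le_one_right ha hnx]
end

section
/- Under these assumptions, the sequence ψ defined by ψ_n = ψ_0 · Π_{j=0}^{n−1} w_1(j)/w_{−1}(j+1) for n ≥ 1, where ψ_0 = [1 + Σ_{n=1}^{N−1} Π_{j=0}^{n−1} w_1(j)/w_{−1}(j+1) + (w_{−1}^*/(w_{−1}^* − w_1^*))·Π_{j=0}^{N−1} w_1(j)/w_{−1}(j+1)]^{−1}, is a stationary probability distribution for P: ψ_n ≥ 0 for all n, Σ_{n=0}^{∞} ψ_n = 1, and for every n ∈ ℕ, ψ_n = Σ_{m=0}^{∞} ψ_m P(m,n). -/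
/-- The sequence $\psi$ defined by the birth-death product formula is a
stationary probability distribution for the kernel $P$. -/
theorem stmt_16
    (N : ℕ) (hN : 1 ≤ N)
    (w1 wm1 : ℕ → ℝ) (w1s wm1s : ℝ)
    (hw1 : ∀ j, 0 < w1 j ∧ w1 j ≤ 1) (hwm1 : ∀ j, 0 < wm1 j ∧ wm1 j ≤ 1)
    (hsum : ∀ j, 1 ≤ j → w1 j + wm1 j ≤ 1)
    (hconst1 : ∀ j, N ≤ j → w1 j = w1s)
    (hconstm : ∀ j, N ≤ j → wm1 j = wm1s)
    (hw1s : 0 < w1s) (hlt : w1s < wm1s)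
    (P : ℕ → ℕ → ℝ)
    (hPup : ∀ n, P n (n + 1) = w1 n)
    (hPdown : ∀ n, 1 ≤ n → P n (n - 1) = wm1 n)
    (hPstay : ∀ n, 1 ≤ n → P n n = 1 - w1 n - wm1 n)
    (hP00 : P 0 0 = 1 - w1 0)
    (hPzero : ∀ m n, n ≠ m + 1 → m ≠ n + 1 → m ≠ n → P m n = 0)
    (ψ : ℕ → ℝ)
    (hψ0 : ψ 0 = (1 + ∑ n ∈ Finset.Icc 1 (N - 1), ∏ j ∈ Finset.range n, w1 j / wm1 (j + 1)
      + wm1s / (wm1s - w1s) * ∏ j ∈ Finset.range N, w1 j / wm1 (j + 1))⁻¹)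
    (hψ : ∀ n, 1 ≤ n → ψ n = ψ 0 * ∏ j ∈ Finset.range n, w1 j / wm1 (j + 1)) :
    (∀ n, 0 ≤ ψ n) ∧ HasSum ψ 1 ∧ ∀ n, ψ n = ∑' m, ψ m * P m n := by
  set π : ℕ → ℝ := fun n => ∏ j ∈ Finset.range n, w1 j / wm1 (j + 1) with hπ
  have hπpos : ∀ n, 0 < π n := fun n =>
    Finset.prod_pos fun j _ => div_pos (hw1 j).1 (hwm1 (j + 1)).1
  have hwm1s : 0 < wm1s := lt_trans hw1s hlt
  have hψ' : ∀ n, ψ n = ψ 0 * π n := by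
    intro n
    cases n with
    | zero => simp [hπ]
    | succ k => exact hψ (k + 1) (Nat.succ_le_succ (Nat.zero_le k))
  -- the normalizing constant
  set D : ℝ := 1 + ∑ n ∈ Finset.Icc 1 (N - 1), π n + wm1s / (wm1s - w1s) * π N with hD
  have hDpos : 0 < D := by
    have h1 : 0 ≤ ∑ n ∈ Finset.Icc 1 (N - 1), π n :=
      Finset.sum_nonneg fun n _ => (hπpos n).le
    have h2 : 0 < wm1s / (wm1s - w1s) * π N :=
      mul_pos (div_pos hwm1s (by linarith)) (hπpos N)
    rw [hD]
    linarith
  have hψ0pos : 0 < ψ 0 := by rw [hψ0]; exact inv_pos.mpr hDpos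
  have hnonneg : ∀ n, 0 ≤ ψ n := by
    intro n; rw [hψ']; exact mul_nonneg hψ0pos.le (hπpos n).le
  -- detailed balance
  have db : ∀ n, ψ (n + 1) * wm1 (n + 1) = ψ n * w1 n := by
    intro n
    have hwne : wm1 (n + 1) ≠ 0 := (hwm1 (n + 1)).1.ne'
    have key : ψ (n + 1) = ψ n * (w1 n / wm1 (n + 1)) := by
      rw [hψ' (n + 1), hψ' n, hπ]
      simp only [Finset.prod_range_succ]
      ring
    rw [key, mul_assoc, div_mul_cancel₀ _ hwne]
  refine ⟨hnonneg, ?_, ?_⟩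
  · -- HasSum ψ 1
    set r : ℝ := w1s / wm1s with hr
    have hr0 : 0 ≤ r := (div_pos hw1s hwm1s).le
    have hr1 : r < 1 := (div_lt_one hwm1s).mpr hlt
    have hshift : ∀ k, π (N + k) = π N * r ^ k := by
      intro k
      induction k with
      | zero => simp
      | succ m ih =>
        have h1 : w1 (N + m) = w1s := hconst1 _ (Nat.le_add_right N m)
        have h2 : wm1 (N + m + 1) = wm1s := hconstm _ (by omega)
        have key : π (N + m + 1) = π (N + m) * (w1 (N + m) / wm1 (N + m + 1)) :=
          Finset.prod_range_succ _ _
        rw [show N + (m + 1) = N + m + 1 from rfl, key, ih, h1, h2, pow_succ, hr]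
        ring
    have hgeo : HasSum (fun k => ψ 0 * π N * r ^ k) (ψ 0 * π N * (1 - r)⁻¹) :=
      (hasSum_geometric_of_lt_one hr0 hr1).mul_left _
    have hgeo' : HasSum (fun k => ψ (k + N)) (ψ 0 * π N * (1 - r)⁻¹) := by
      refine hgeo.congr_fun fun k => ?_
      rw [hψ' (k + N), Nat.add_comm k N, hshift k, mul_assoc]
    have htot := (hasSum_nat_add_iff N).mp hgeo'
    have hrange : Finset.range N = insert 0 (Finset.Icc 1 (N - 1)) := by
      ext x
      simp only [Finset.mem_range, Finset.mem_insert, Finset.mem_Icc]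
      omega
    have hsumπ : ∑ i ∈ Finset.range N, π i = 1 + ∑ n ∈ Finset.Icc 1 (N - 1), π n := by
      rw [hrange, Finset.sum_insert (by simp)]
      simp [hπ]
    have hval : ψ 0 * π N * (1 - r)⁻¹ + ∑ i ∈ Finset.range N, ψ i = 1 := by
      have hsumψ : ∑ i ∈ Finset.range N, ψ i = ψ 0 * ∑ i ∈ Finset.range N, π i := by
        rw [Finset.mul_sum]; exact Finset.sum_congr rfl fun i _ => hψ' i
      have hinv : (1 - r)⁻¹ = wm1s / (wm1s - w1s) := by
        rw [hr]
        field_simp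
      rw [hsumψ, hsumπ, hinv]
      have : ψ 0 * D = 1 := by rw [hψ0, hD]; exact inv_mul_cancel₀ hDpos.ne'
      calc ψ 0 * π N * (wm1s / (wm1s - w1s)) + ψ 0 * (1 + ∑ n ∈ Finset.Icc 1 (N - 1), π n)
          = ψ 0 * D := by rw [hD]; ring
        _ = 1 := this
    rwa [hval] at htot
  · -- stationarity
    intro n
    have hfin : ∀ m ∉ Finset.range (n + 2), ψ m * P m n = 0 := by
      intro m hm
      simp only [Finset.mem_range] at hm
      rw [hPzero m n (by omega) (by omega) (by omega), mul_zero]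
    rw [tsum_eq_sum hfin]
    cases n with
    | zero =>
      have h10 : P 1 0 = wm1 1 := hPdown 1 le_rfl
      have hdb := db 0
      simp only [Finset.sum_range_succ, Finset.sum_range_zero]
      rw [hP00, h10]
      nlinarith [hdb]
    | succ k =>
      have hzero : ∑ m ∈ Finset.range k, ψ m * P m (k + 1) = 0 := by
        refine Finset.sum_eq_zero fun m hm => ?_
        simp only [Finset.mem_range] at hm
        rw [hPzero m (k + 1) (by omega) (by omega) (by omega), mul_zero]
      have hs : Finset.range (k + 1 + 2) = Finset.range (k + 3) := rfl
      rw [hs, Finset.sum_range_succ, Finset.sum_range_succ, Finset.sum_range_succ, hzero]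
      have h1 : P k (k + 1) = w1 k := hPup k
      have h2 : P (k + 1) (k + 1) = 1 - w1 (k + 1) - wm1 (k + 1) := hPstay (k + 1) (by omega)
      have h3 : P (k + 2) (k + 1) = wm1 (k + 2) := by
        have := hPdown (k + 2) (by omega)
        simpa using this
      rw [h1, h2, h3]
      have hdb1 := db k
      have hdb2 := db (k + 1)
      linarith [hdb1, hdb2]
end
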